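/- Let L ⊆ ℂⁿ×ℂⁿ be a positive Lagrangian subspace. Then the projection π : L → ℂⁿ, π(p,q) = q, is a linear isomorphism, and there exists a unique complex symmetric n×n matrix B with positive definite imaginary part such that L = L_B = {(Bq,q) : q ∈ ℂⁿ}. -/

import Mathlib

open Matrix

noncomputable section

/-- The standard symplectic matrix `Ω = [[0, −I],[I, 0]]` on `ℝ²ⁿ`. -/
def Omg (n : ℕ) : Matrix (Fin n ⊕ Fin n) (Fin n ⊕ Fin n) ℝ :=
  fromBlocks 0 (-1) 1 0

/-- The complexification of `Ω`. -/
def OmgC (n : ℕ) : Matrix (Fin n ⊕ Fin n) (Fin n ⊕ Fin n) ℂ :=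
  (Omg n).map Complex.ofReal

/-- Componentwise imaginary part of a complex matrix. -/
def matIm {m k : Type*} (A : Matrix m k ℂ) : Matrix m k ℝ := A.map Complex.im

/-- The hermitian form `h(z,z) = (i/2) z·Ω z̄` measuring positivity of Lagrangian
subspaces (the bar is componentwise complex conjugation). -/
def posform {n : ℕ} (z : Fin n ⊕ Fin n → ℂ) : ℂ :=
  (Complex.I / 2) * (z ⬝ᵥ OmgC n *ᵥ star z)

/-- The subset `L_B = {(Bq, q) : q ∈ ℂⁿ}` of `ℂⁿ×ℂⁿ`. -/
def LBset {n : ℕ} (B : Matrix (Fin n) (Fin n) ℂ) : Set (Fin n ⊕ Fin n → ℂ) :=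
  {z | ∃ q : Fin n → ℂ, z = Sum.elim (B *ᵥ q) q}

/-! Positivity makes `π` injective, since `(i/2) z·Ωz̄` vanishes on every `z = (p, 0)`; as
`dim L = n`, `L` is then the graph `L_B` of the linear map `B = p ∘ π⁻¹`. On `L_B` the symplectic
form reads `(Bq, q)·Ω(Bq', q') = q·(B − Bᵀ)q'`, so isotropy is the symmetry of `B`, and at real
`q = x` the positivity form is `x·(Im B)x`, so `Im B` is positive definite. `L_B` determines `B`
through its points `(B e_j, e_j)`. -/

section

variable {n : ℕ}

def sndProj (L : Submodule ℂ (Fin n ⊕ Fin n → ℂ)) : L →ₗ[ℂ] (Fin n → ℂ) :=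
  LinearMap.funLeft ℂ ℂ Sum.inr ∘ₗ L.subtype

theorem dotProduct_OmgC_mulVec (z w : Fin n ⊕ Fin n → ℂ) :
    z ⬝ᵥ OmgC n *ᵥ w =
      ∑ i, z (Sum.inr i) * w (Sum.inl i) - ∑ i, z (Sum.inl i) * w (Sum.inr i) := by
  simp [OmgC, Omg, dotProduct, mulVec, Fintype.sum_sum_type, fromBlocks, Matrix.one_apply,
    mul_comm, apply_ite Complex.ofReal, sub_eq_neg_add]

theorem posform_eq_zero_of_inr_eq_zero {z : Fin n ⊕ Fin n → ℂ} (hz : ∀ i, z (Sum.inr i) = 0) :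
    posform z = 0 := by
  simp [posform, dotProduct_OmgC_mulVec, hz]

theorem sndProj_injective_of_posform_pos {L : Submodule ℂ (Fin n ⊕ Fin n → ℂ)}
    (hpos : ∀ z ∈ L, z ≠ 0 → 0 < (posform z).re) : Function.Injective (sndProj L) := by
  rw [← LinearMap.ker_eq_bot, LinearMap.ker_eq_bot']
  intro z hz
  by_contra hz0
  have hzero : posform (z : Fin n ⊕ Fin n → ℂ) = 0 :=
    posform_eq_zero_of_inr_eq_zero fun i => congrFun hz i
  simpa [hzero] using hpos z z.2 (by simpa using hz0)

theorem exists_coe_eq_LBset_of_injective {L : Submodule ℂ (Fin n ⊕ Fin n → ℂ)}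
    (hdim : Module.finrank ℂ L = n) (hinj : Function.Injective (sndProj L)) :
    ∃ B : Matrix (Fin n) (Fin n) ℂ, (L : Set (Fin n ⊕ Fin n → ℂ)) = LBset B := by
  let e := (sndProj L).linearEquivOfInjective hinj (by simp [hdim])
  let B := LinearMap.toMatrix' (LinearMap.funLeft ℂ ℂ Sum.inl ∘ₗ L.subtype ∘ₗ e.symm.toLinearMap)
  have graph : ∀ q, Sum.elim (B *ᵥ q) q = (e.symm q : Fin n ⊕ Fin n → ℂ) := by
    intro q
    ext (i | i)
    · rw [Sum.elim_inl, ← Matrix.toLin'_apply, Matrix.toLin'_toMatrix']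
      rfl
    · exact congrFun (e.apply_symm_apply q).symm i
  refine ⟨B, Set.ext fun z => ⟨fun hz => ⟨e ⟨z, hz⟩, ?_⟩, ?_⟩⟩
  · rw [graph, e.symm_apply_apply]
  · rintro ⟨q, rfl⟩
    rw [graph]
    exact (e.symm q).2

theorem LBset_injective : Function.Injective (LBset (n := n)) := by
  intro B B' h
  refine Matrix.ext_of_mulVec_single fun j => ?_
  obtain ⟨q, hq⟩ : Sum.elim (B' *ᵥ Pi.single j 1) (Pi.single j 1) ∈ LBset B := h ▸ ⟨_, rfl⟩
  have hqj : q = Pi.single j 1 := funext fun k => (congrFun hq (Sum.inr k)).symm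
  subst hqj
  exact funext fun i => (congrFun hq (Sum.inl i)).symm

theorem dotProduct_OmgC_mulVec_elim (B : Matrix (Fin n) (Fin n) ℂ) (q q' : Fin n → ℂ) :
    Sum.elim (B *ᵥ q) q ⬝ᵥ OmgC n *ᵥ Sum.elim (B *ᵥ q') q' = q ⬝ᵥ (B - Bᵀ) *ᵥ q' := by
  rw [dotProduct_OmgC_mulVec, sub_mulVec, dotProduct_sub, dotProduct_mulVec q Bᵀ, vecMul_transpose]
  simp only [Sum.elim_inl, Sum.elim_inr]
  rfl

theorem transpose_eq_of_isotropic_LBset {B : Matrix (Fin n) (Fin n) ℂ}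
    (h : ∀ z ∈ LBset B, ∀ z' ∈ LBset B, z ⬝ᵥ OmgC n *ᵥ z' = 0) : Bᵀ = B := by
  refine (sub_eq_zero.1 (Matrix.ext fun i j => ?_)).symm
  have := h _ ⟨Pi.single i 1, rfl⟩ _ ⟨Pi.single j 1, rfl⟩
  rw [dotProduct_OmgC_mulVec_elim] at this
  simpa using this

theorem posform_elim_ofReal (B : Matrix (Fin n) (Fin n) ℂ) (x : Fin n → ℝ) :
    posform (Sum.elim (B *ᵥ (Complex.ofReal ∘ x)) (Complex.ofReal ∘ x)) =
      ((x ⬝ᵥ matIm B *ᵥ x : ℝ) : ℂ) := by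
  have him : ∀ i, ((B *ᵥ (Complex.ofReal ∘ x)) i).im = (matIm B *ᵥ x) i := by
    simp [mulVec, dotProduct, matIm, Complex.im_sum]
  rw [posform, dotProduct_OmgC_mulVec, ← Finset.sum_sub_distrib, Finset.mul_sum]
  push_cast [dotProduct]
  refine Finset.sum_congr rfl fun i _ => ?_
  apply Complex.ext <;> simp [him] <;> ring

theorem posDef_matIm_of_posform_pos {B : Matrix (Fin n) (Fin n) ℂ} (hsym : Bᵀ = B)
    (hpos : ∀ z ∈ LBset B, z ≠ 0 → 0 < (posform z).re) : (matIm B).PosDef := by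
  refine posDef_iff_dotProduct_mulVec.2 ⟨?_, fun x hx => ?_⟩
  · ext i j
    simpa [matIm] using congrArg Complex.im (congrFun (congrFun hsym i) j)
  · have hz : Sum.elim (B *ᵥ (Complex.ofReal ∘ x)) (Complex.ofReal ∘ x) ≠ 0 := fun h =>
      hx (funext fun i => by simpa using congrFun h (Sum.inr i))
    simpa [posform_elim_ofReal] using hpos _ ⟨_, rfl⟩ hz

end

/-- Let `L ⊆ ℂⁿ×ℂⁿ` be a positive Lagrangian subspace (an
`n`-dimensional subspace on which `Ω` vanishes and `(i/2) z·Ω z̄ > 0` for nonzero `z`).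
Then the projection `π : L → ℂⁿ`, `π(p,q) = q`, is a linear bijection, and there is a
unique complex symmetric matrix `B` with positive definite imaginary part such that
`L = L_B = {(Bq,q) : q ∈ ℂⁿ}`. -/
theorem statement4 (n : ℕ) (L : Submodule ℂ (Fin n ⊕ Fin n → ℂ))
    (hdim : Module.finrank ℂ L = n)
    (hLag : ∀ z ∈ L, ∀ z' ∈ L, z ⬝ᵥ OmgC n *ᵥ z' = 0)
    (hpos : ∀ z ∈ L, z ≠ 0 → (posform z).im = 0 ∧ 0 < (posform z).re) :
    Function.Bijective (fun z : L => fun i : Fin n => (z : Fin n ⊕ Fin n → ℂ) (Sum.inr i)) ∧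
    ∃! B : Matrix (Fin n) (Fin n) ℂ,
      Bᵀ = B ∧ (matIm B).PosDef ∧ (L : Set (Fin n ⊕ Fin n → ℂ)) = LBset B := by
  have hinj : Function.Injective (sndProj L) :=
    sndProj_injective_of_posform_pos fun z hz hz0 => (hpos z hz hz0).2
  have hsurj : Function.Surjective (sndProj L) :=
    (LinearMap.injective_iff_surjective_of_finrank_eq_finrank (by simp [hdim])).1 hinj
  obtain ⟨B, hB⟩ := exists_coe_eq_LBset_of_injective hdim hinj
  have hmem : ∀ z, z ∈ L ↔ z ∈ LBset B := fun z => Set.ext_iff.1 hB z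
  have hsym : Bᵀ = B := transpose_eq_of_isotropic_LBset fun z hz z' hz' =>
    hLag z ((hmem z).2 hz) z' ((hmem z').2 hz')
  have hpd : (matIm B).PosDef :=
    posDef_matIm_of_posform_pos hsym fun z hz hz0 => (hpos z ((hmem z).2 hz) hz0).2
  exact ⟨⟨hinj, hsurj⟩, B, ⟨hsym, hpd, hB⟩, fun B' hB' => LBset_injective (hB'.2.2.symm.trans hB)⟩
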